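/- Characterization of Lebesgue integrability via the compact-line Kurzweil–Stieltjes integral: let K be a compact line, G : K → ℝ a nondecreasing, positive, amenable function, and μ_G the induced Radon measure. A Borel-measurable function f : K → ℝ is Lebesgue μ_G-integrable if and only if both f and |f| are G-integrable, and in that case ∫_K f dG = ∫_K f dμ_G. -/

import Mathlib

open Set Filter MeasureTheory

/-- A tagged partition of the interval `[a,b]` in a linear order `K`. -/
structure TaggedPartition (K : Type*) [LinearOrder K] (a b : K) where
  n : ℕ
  x : ℕ → K
  t : ℕ → K
  x_zero : x 0 = a
  x_last : x n = b
  mono : ∀ i < n, x i ≤ x (i + 1)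
  tag_mem : ∀ i < n, t (i + 1) ∈ Set.Icc (x i) (x (i + 1))

/-- A gauge on the interval `[a,b]` of `K`: each point of `[a,b]` is assigned a
relatively open subinterval of `[a,b]` containing it. -/
def IsGauge (K : Type*) [LinearOrder K] [TopologicalSpace K] (a b : K) (δ : K → Set K) : Prop :=
  ∀ x ∈ Set.Icc a b, x ∈ δ x ∧ (δ x).OrdConnected ∧ ∃ U, IsOpen U ∧ δ x = U ∩ Set.Icc a b

/-- A tagged partition is `δ`-fine when `(x_{i-1}, x_i] ⊆ δ(t_i)` for all `i`. -/
def TaggedPartition.IsFine {K : Type*} [LinearOrder K] {a b : K}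
    (P : TaggedPartition K a b) (δ : K → Set K) : Prop :=
  ∀ i < P.n, Set.Ioc (P.x i) (P.x (i + 1)) ⊆ δ (P.t (i + 1))

/-- The Riemann sum `S(f,G,P) = f(a)G(a) + Σ f(t_i)(G(x_i) - G(x_{i-1}))`. -/
noncomputable def riemannSum {K : Type*} [LinearOrder K] {a b : K}
    (f G : K → ℝ) (P : TaggedPartition K a b) : ℝ :=
  f a * G a + ∑ i ∈ Finset.range P.n, f (P.t (i + 1)) * (G (P.x (i + 1)) - G (P.x i))

/-- `f` has Kurzweil–Stieltjes integral `A` with respect to `G` over `[a,b]`. -/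
def HasIntegral {K : Type*} [LinearOrder K] [TopologicalSpace K]
    (f G : K → ℝ) (a b : K) (A : ℝ) : Prop :=
  ∀ ε : ℝ, 0 < ε → ∃ δ : K → Set K, IsGauge K a b δ ∧
    ∀ P : TaggedPartition K a b, P.IsFine δ → |riemannSum f G P - A| < ε

/-- `G` is amenable: right-continuous everywhere, and regulated (left limits exist at
left-dense points, right limits at right-dense points). -/
def Amenable {K : Type*} [LinearOrder K] [TopologicalSpace K] [BoundedOrder K]
    (G : K → ℝ) : Prop :=
  (∀ x : K, ContinuousWithinAt G (Set.Ici x) x) ∧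
  (∀ x : K, x ≠ ⊥ → (¬ ∃ y, y ⋖ x) → ∃ l, Filter.Tendsto G (nhdsWithin x (Set.Iio x)) (nhds l)) ∧
  (∀ x : K, x ≠ ⊤ → (¬ ∃ y, x ⋖ y) → ∃ l, Filter.Tendsto G (nhdsWithin x (Set.Ioi x)) (nhds l))

open Classical in
/-- `L_G(x)`: `0` at the least element, `G` of the immediate predecessor if `x` is
left-isolated, and the left limit of `G` at `x` if `x` is left-dense. -/
noncomputable def Lfun {K : Type*} [LinearOrder K] [TopologicalSpace K] [BoundedOrder K]
    (G : K → ℝ) (x : K) : ℝ :=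
  if x = ⊥ then 0
  else if h : ∃ y, y ⋖ x then G h.choose
  else Function.leftLim G x

/-- The set of variation sums of `G` over divisions of `[a,b]`. -/
def varSums {K : Type*} [LinearOrder K] (G : K → ℝ) (a b : K) : Set ℝ :=
  {v | ∃ (n : ℕ) (x : ℕ → K), x 0 = a ∧ x n = b ∧ (∀ i < n, x i ≤ x (i + 1)) ∧
        v = ∑ i ∈ Finset.range n, |G (x (i + 1)) - G (x i)|}

/-- `S` is null for the outer measure induced by `μ` via covers by countably many
open intervals. -/
def GNull {K : Type*} [LinearOrder K] [TopologicalSpace K] [MeasurableSpace K]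
    (μ : MeasureTheory.Measure K) (S : Set K) : Prop :=
  ∀ ε : ℝ, 0 < ε → ∃ I : ℕ → Set K, (∀ n, IsOpen (I n) ∧ (I n).OrdConnected) ∧
    S ⊆ ⋃ n, I n ∧ ∑' n, μ (I n) < ENNReal.ofReal ε

/-!
The measure `μ` gives `(x_{i-1}, x_i]` the mass `G x_i - G x_{i-1}` and `{⊥}` the mass `G ⊥`, so
a Riemann sum is the integral of a step function. If `f` is `μ`-integrable, Vitali–Carathéodory
gives a lower semicontinuous `g > f` with `∫ g < ∫ f + ε`; the gauge assigning to `t` the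
order-connected component of `{f t < g}` containing `t` makes every fine Riemann sum at most
`∫ g`, and the same argument for `-f` bounds it from below. Conversely, if `|f|` has gauge
integral `B`, the truncations `min |f| n` are bounded, hence `μ`-integrable, so their gauge
integrals are their Lebesgue integrals, which are at most `B` by monotonicity of the gauge
integral; monotone convergence then bounds `∫ |f|`. Uniqueness and monotonicity of the gauge
integral rest on Cousin's lemma, proved by a supremum argument in the compact line `K`.
-/

section TaggedPartition

variable {K : Type*} [LinearOrder K]

theorem TaggedPartition.IsFine.mono {a b : K} {P : TaggedPartition K a b} {δ δ' : K → Set K}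
    (hP : P.IsFine δ) (hδ : ∀ x, δ x ⊆ δ' x) : P.IsFine δ' :=
  fun i hi => (hP i hi).trans (hδ _)

def TaggedPartition.snoc {a y c τ : K} (P : TaggedPartition K a y) (hyc : y ≤ c)
    (hτ : τ ∈ Icc y c) : TaggedPartition K a c where
  n := P.n + 1
  x i := if i ≤ P.n then P.x i else c
  t i := if i ≤ P.n then P.t i else τ
  x_zero := by simp [P.x_zero]
  x_last := by simp
  mono i hi := by
    rcases Nat.lt_succ_iff_lt_or_eq.1 hi with h | rfl
    · simpa [h.le, Nat.succ_le_of_lt h] using P.mono i h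
    · simpa [P.x_last] using hyc
  tag_mem i hi := by
    rcases Nat.lt_succ_iff_lt_or_eq.1 hi with h | rfl
    · simpa [h.le, Nat.succ_le_of_lt h] using P.tag_mem i h
    · simpa [P.x_last] using hτ

theorem TaggedPartition.IsFine.snoc {a y c τ : K} {P : TaggedPartition K a y} {δ : K → Set K}
    (hP : P.IsFine δ) (hyc : y ≤ c) (hτ : τ ∈ Icc y c) (hδ : Ioc y c ⊆ δ τ) :
    (P.snoc hyc hτ).IsFine δ := by
  intro i hi
  rcases Nat.lt_succ_iff_lt_or_eq.1 hi with h | rfl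
  · simpa [TaggedPartition.snoc, h.le, Nat.succ_le_of_lt h] using hP i h
  · simpa [TaggedPartition.snoc, P.x_last] using hδ

theorem riemannSum_neg {a b : K} (f G : K → ℝ) (P : TaggedPartition K a b) :
    riemannSum (-f) G P = -riemannSum f G P := by
  simp only [riemannSum, Pi.neg_apply, neg_mul, Finset.sum_neg_distrib, neg_add]

theorem riemannSum_mono {a b : K} {f g G : K → ℝ} (hG : Monotone G) (hGa : 0 ≤ G a)
    (hfg : ∀ x, f x ≤ g x) (P : TaggedPartition K a b) : riemannSum f G P ≤ riemannSum g G P :=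
  add_le_add (mul_le_mul_of_nonneg_right (hfg a) hGa) <| Finset.sum_le_sum fun i hi =>
    mul_le_mul_of_nonneg_right (hfg _) (sub_nonneg.2 (hG (P.mono i (Finset.mem_range.1 hi))))

end TaggedPartition

section GaugeIntegral

theorem IsOpen.ordConnectedComponent {K : Type*} [LinearOrder K] [TopologicalSpace K]
    [OrderTopology K] {U : Set K} (hU : IsOpen U) (t : K) :
    IsOpen (ordConnectedComponent U t) :=
  isOpen_iff_mem_nhds.2 fun _ hs => by
    rw [ordConnectedComponent_eq hs]
    exact ordConnectedComponent_mem_nhds.2 (hU.mem_nhds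
      (ordConnectedComponent_subset (self_mem_ordConnectedComponent.2 (hs right_mem_uIcc))))

variable {K : Type*} [LinearOrder K] [TopologicalSpace K] [BoundedOrder K]

theorem isGauge_bot_top_iff {δ : K → Set K} :
    IsGauge K ⊥ ⊤ δ ↔ ∀ x, x ∈ δ x ∧ (δ x).OrdConnected ∧ IsOpen (δ x) := by
  simp only [IsGauge, Icc_bot_top, inter_univ, mem_univ, true_imp_iff, exists_eq_right']

theorem IsGauge.inter {δ δ' : K → Set K} (hδ : IsGauge K ⊥ ⊤ δ) (hδ' : IsGauge K ⊥ ⊤ δ') :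
    IsGauge K ⊥ ⊤ (fun x => δ x ∩ δ' x) := by
  rw [isGauge_bot_top_iff] at *
  exact fun x => ⟨⟨(hδ x).1, (hδ' x).1⟩, (hδ x).2.1.inter (hδ' x).2.1,
    (hδ x).2.2.inter (hδ' x).2.2⟩

variable [OrderTopology K]

theorem isGauge_ordConnectedComponent {U : K → Set K} (hU : ∀ x, IsOpen (U x))
    (hxU : ∀ x, x ∈ U x) :
    IsGauge K ⊥ ⊤ (fun x => ordConnectedComponent (U x) x) :=
  isGauge_bot_top_iff.2 fun x =>
    ⟨self_mem_ordConnectedComponent.2 (hxU x), inferInstance, (hU x).ordConnectedComponent x⟩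

variable [CompactSpace K]

theorem exists_isFine_of_isGauge {δ : K → Set K} (hδ : IsGauge K ⊥ ⊤ δ) :
    ∃ P : TaggedPartition K ⊥ ⊤, P.IsFine δ := by
  rw [isGauge_bot_top_iff] at hδ
  let A : Set K := {y | ∃ P : TaggedPartition K ⊥ y, P.IsFine δ}
  have hbot : (⊥ : K) ∈ A :=
    ⟨⟨0, fun _ => ⊥, fun _ => ⊥, rfl, rfl, by simp, by simp⟩, by simp [TaggedPartition.IsFine]⟩
  obtain ⟨c, hc, hc_max⟩ := isClosed_closure.isCompact.exists_isGreatest ⟨⊥, subset_closure hbot⟩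
  obtain ⟨hcδ, hδc_conn, hδc_open⟩ := hδ c
  have hcA : c ∈ A := by
    obtain ⟨y, hyδ, P, hP⟩ := mem_closure_iff.1 hc (δ c) hδc_open hcδ
    have hyc : y ≤ c := hc_max (subset_closure ⟨P, hP⟩)
    exact ⟨_, hP.snoc hyc ⟨hyc, le_rfl⟩ fun s hs => hδc_conn.out hyδ hcδ ⟨hs.1.le, hs.2⟩⟩
  rcases eq_top_or_lt_top c with rfl | hc_top
  · exact hcA
  obtain ⟨P, hP⟩ := hcA
  suffices ∃ z, c < z ∧ z ∈ A by
    obtain ⟨z, hcz, hz⟩ := this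
    exact absurd (hc_max (subset_closure hz)) (not_le.2 hcz)
  by_cases hδc_left : δ c ⊆ Iic c
  · -- then `δ c` is a neighbourhood of `c` inside `Iic c`, so `c` has an immediate successor `u`
    obtain ⟨u, hcu, hIco⟩ := exists_Ico_subset_of_mem_nhds
      (mem_of_superset (hδc_open.mem_nhds hcδ) hδc_left) ⟨⊤, hc_top⟩
    have hIoc : Ioc c u ⊆ δ u := fun s hs => by
      rcases hs.2.eq_or_lt with rfl | hsu
      · exact (hδ s).1
      · exact absurd (hIco ⟨hs.1.le, hsu⟩) (not_le.2 hs.1)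
    exact ⟨u, hcu, _, hP.snoc hcu.le ⟨hcu.le, le_rfl⟩ hIoc⟩
  · obtain ⟨z, hzδ, hcz⟩ := not_subset.1 hδc_left
    rw [mem_Iic, not_le] at hcz
    exact ⟨z, hcz, _, hP.snoc hcz.le ⟨le_rfl, hcz.le⟩
      fun s hs => hδc_conn.out hcδ hzδ ⟨hs.1.le, hs.2⟩⟩

theorem HasIntegral.unique {f G : K → ℝ} {A B : ℝ} (hA : HasIntegral f G ⊥ ⊤ A)
    (hB : HasIntegral f G ⊥ ⊤ B) : A = B := by
  refine eq_of_forall_dist_le fun ε hε => ?_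
  obtain ⟨δ, hδ, hA⟩ := hA (ε / 2) (half_pos hε)
  obtain ⟨δ', hδ', hB⟩ := hB (ε / 2) (half_pos hε)
  obtain ⟨P, hP⟩ := exists_isFine_of_isGauge (hδ.inter hδ')
  have hPA := abs_lt.1 (hA P (hP.mono fun _ => inter_subset_left))
  have hPB := abs_lt.1 (hB P (hP.mono fun _ => inter_subset_right))
  rw [Real.dist_eq, abs_le]
  constructor <;> linarith

theorem HasIntegral.le {f g G : K → ℝ} {A B : ℝ} (hG : Monotone G) (hG_bot : 0 ≤ G ⊥)
    (hA : HasIntegral f G ⊥ ⊤ A) (hB : HasIntegral g G ⊥ ⊤ B) (hfg : ∀ x, f x ≤ g x) :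
    A ≤ B := by
  refine le_of_forall_pos_lt_add fun ε hε => ?_
  obtain ⟨δ, hδ, hA⟩ := hA (ε / 2) (half_pos hε)
  obtain ⟨δ', hδ', hB⟩ := hB (ε / 2) (half_pos hε)
  obtain ⟨P, hP⟩ := exists_isFine_of_isGauge (hδ.inter hδ')
  have hPA := abs_lt.1 (hA P (hP.mono fun _ => inter_subset_left))
  have hPB := abs_lt.1 (hB P (hP.mono fun _ => inter_subset_right))
  linarith [riemannSum_mono hG hG_bot hfg P]

end GaugeIntegral

section Truncation

variable {α : Type*} [MeasurableSpace α] {μ : Measure α} [IsFiniteMeasure μ]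

theorem mul_measureReal_le_setIntegral {φ : α → ℝ} {J : Set α} {c : ℝ}
    (hφ : IntegrableOn φ J μ) (hcφ : ∀ᵐ s ∂μ.restrict J, c ≤ φ s) :
    c * μ.real J ≤ ∫ s in J, φ s ∂μ :=
  calc c * μ.real J = ∫ _ in J, c ∂μ := by rw [setIntegral_const, smul_eq_mul, mul_comm]
    _ ≤ ∫ s in J, φ s ∂μ := setIntegral_mono_ae_restrict integrableOn_const hφ hcφ

variable {f : α → ℝ}

theorem integrable_min_abs (hf : AEMeasurable f μ) {c : ℝ} (hc : 0 ≤ c) :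
    Integrable (fun x => min |f x| c) μ :=
  Integrable.of_mem_Icc 0 c (hf.abs.min aemeasurable_const)
    (ae_of_all _ fun _ => ⟨le_min (abs_nonneg _) hc, min_le_right _ _⟩)

theorem integrable_of_forall_integral_min_abs_le (hf : AEStronglyMeasurable f μ) {B : ℝ}
    (hB : ∀ n : ℕ, ∫ x, min |f x| n ∂μ ≤ B) : Integrable f μ := by
  have htrunc (n : ℕ) : Integrable (fun x => min |f x| n) μ :=
    integrable_min_abs hf.aemeasurable n.cast_nonneg
  have hsup (x : α) : ‖f x‖ₑ = ⨆ n : ℕ, ENNReal.ofReal (min |f x| n) := by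
    rw [Real.enorm_eq_ofReal_abs]
    refine le_antisymm (le_iSup_of_le ⌈|f x|⌉₊ ?_)
      (iSup_le fun n => ENNReal.ofReal_le_ofReal (min_le_left _ _))
    rw [min_eq_left (Nat.le_ceil _)]
  refine ⟨hf, ?_⟩
  calc ∫⁻ x, ‖f x‖ₑ ∂μ = ⨆ n : ℕ, ∫⁻ x, ENNReal.ofReal (min |f x| n) ∂μ := by
        simp_rw [hsup]
        exact lintegral_iSup' (fun n => (htrunc n).aemeasurable.ennreal_ofReal) (ae_of_all _
          fun x m n hmn => ENNReal.ofReal_le_ofReal (min_le_min_left _ (Nat.cast_le.2 hmn)))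
    _ ≤ ENNReal.ofReal B := iSup_le fun n => by
        rw [← ofReal_integral_eq_lintegral_ofReal (htrunc n)
          (ae_of_all _ fun x => le_min (abs_nonneg _) n.cast_nonneg)]
        exact ENNReal.ofReal_le_ofReal (hB n)
    _ < ⊤ := ENNReal.ofReal_lt_top

end Truncation

section DistribFun

variable {K : Type*} [LinearOrder K] [MeasurableSpace K] {μ : Measure K}

/-- The theorem's `G` is the distribution function of `μ`. -/
def distribFun (μ : Measure K) (x : K) : ℝ :=
  μ.real (Iic x)

theorem monotone_distribFun [IsFiniteMeasure μ] : Monotone (distribFun μ) :=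
  fun _ _ hab => measureReal_mono (Iic_subset_Iic.2 hab)

variable [TopologicalSpace K] [OrderTopology K] [BorelSpace K]

theorem distribFun_sub_distribFun [IsFiniteMeasure μ] {a b : K} (hab : a ≤ b) :
    distribFun μ b - distribFun μ a = μ.real (Ioc a b) := by
  rw [distribFun, distribFun, ← Iic_union_Ioc_eq_Iic hab,
    measureReal_union (Iic_disjoint_Ioc le_rfl) measurableSet_Ioc, add_sub_cancel_left]

theorem riemannSum_distribFun [IsFiniteMeasure μ] {a b : K} (f : K → ℝ)
    (P : TaggedPartition K a b) :
    riemannSum f (distribFun μ) P = f a * μ.real (Iic a) +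
      ∑ i ∈ Finset.range P.n, f (P.t (i + 1)) * μ.real (Ioc (P.x i) (P.x (i + 1))) := by
  rw [riemannSum, distribFun]
  congr 1
  exact Finset.sum_congr rfl fun i hi => by
    rw [distribFun_sub_distribFun (P.mono i (Finset.mem_range.1 hi))]

theorem setIntegral_Iic_eq_add_sum {φ : K → ℝ} (hφ : Integrable φ μ) (x : ℕ → K) (n : ℕ)
    (hx : ∀ i < n, x i ≤ x (i + 1)) :
    ∫ s in Iic (x n), φ s ∂μ =
      ∫ s in Iic (x 0), φ s ∂μ + ∑ i ∈ Finset.range n, ∫ s in Ioc (x i) (x (i + 1)), φ s ∂μ := by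
  induction n with
  | zero => rw [Finset.sum_range_zero, add_zero]
  | succ n ih =>
    rw [← Iic_union_Ioc_eq_Iic (hx n n.lt_succ_self),
      setIntegral_union (Iic_disjoint_Ioc le_rfl) measurableSet_Ioc hφ.integrableOn hφ.integrableOn,
      ih fun i hi => hx i (Nat.lt_succ_of_lt hi), Finset.sum_range_succ, add_assoc]

variable [BoundedOrder K] [IsFiniteMeasure μ]

theorem riemannSum_le_integral {f φ : K → ℝ} {δ : K → Set K} (hδ : IsGauge K ⊥ ⊤ δ)
    {P : TaggedPartition K ⊥ ⊤} (hP : P.IsFine δ) (hφ : Integrable φ μ)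
    (hfφ : ∀ᵐ s ∂μ, ∀ t, s ∈ δ t → f t ≤ φ s) :
    riemannSum f (distribFun μ) P ≤ ∫ s, φ s ∂μ := by
  have hsplit := setIntegral_Iic_eq_add_sum hφ P.x P.n P.mono
  rw [P.x_zero, P.x_last, Iic_top, setIntegral_univ] at hsplit
  rw [riemannSum_distribFun, hsplit]
  refine add_le_add (mul_measureReal_le_setIntegral hφ.integrableOn ?_)
    (Finset.sum_le_sum fun i hi => mul_measureReal_le_setIntegral hφ.integrableOn ?_)
  · filter_upwards [ae_restrict_mem measurableSet_Iic, ae_restrict_of_ae hfφ] with s hs hfφs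
    rw [mem_Iic, le_bot_iff] at hs
    subst hs
    exact hfφs ⊥ (isGauge_bot_top_iff.1 hδ ⊥).1
  · filter_upwards [ae_restrict_mem measurableSet_Ioc, ae_restrict_of_ae hfφ] with s hs hfφs
    exact hfφs _ (hP i (Finset.mem_range.1 hi) hs)

variable [μ.WeaklyRegular]

theorem exists_isGauge_riemannSum_lt {f : K → ℝ} (hf : Integrable f μ) {ε : ℝ} (hε : 0 < ε) :
    ∃ δ, IsGauge K ⊥ ⊤ δ ∧ ∀ P : TaggedPartition K ⊥ ⊤, P.IsFine δ →
      riemannSum f (distribFun μ) P < ∫ x, f x ∂μ + ε := by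
  obtain ⟨g, hfg, hg_lsc, hg_int, hg_top, hg_lt⟩ :=
    exists_lt_lowerSemicontinuous_integral_lt f hf hε
  have hδ := isGauge_ordConnectedComponent (fun t => hg_lsc.isOpen_preimage (f t)) hfg
  refine ⟨_, hδ, fun P hP => (riemannSum_le_integral hδ hP hg_int ?_).trans_lt hg_lt⟩
  filter_upwards [hg_top] with s hs t hst
  simpa using EReal.toReal_le_toReal (ordConnectedComponent_subset hst).le (EReal.coe_ne_bot _)
    hs.ne

theorem hasIntegral_integral {f : K → ℝ} (hf : Integrable f μ) :
    HasIntegral f (distribFun μ) ⊥ ⊤ (∫ x, f x ∂μ) := by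
  intro ε hε
  obtain ⟨δ, hδ, hfδ⟩ := exists_isGauge_riemannSum_lt hf hε
  obtain ⟨δ', hδ', hfδ'⟩ := exists_isGauge_riemannSum_lt hf.neg hε
  refine ⟨_, hδ.inter hδ', fun P hP => abs_lt.2 ⟨?_, ?_⟩⟩
  · have h := hfδ' P (hP.mono fun _ => inter_subset_right)
    simp only [riemannSum_neg, Pi.neg_apply, integral_neg] at h
    linarith
  · linarith [hfδ P (hP.mono fun _ => inter_subset_left)]

theorem integrable_of_hasIntegral_abs [CompactSpace K] {f : K → ℝ}
    (hf : AEStronglyMeasurable f μ) {B : ℝ}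
    (hB : HasIntegral (fun x => |f x|) (distribFun μ) ⊥ ⊤ B) : Integrable f μ :=
  integrable_of_forall_integral_min_abs_le hf fun n =>
    (hasIntegral_integral (integrable_min_abs hf.aemeasurable n.cast_nonneg)).le
      monotone_distribFun measureReal_nonneg hB fun _ => min_le_left _ _

end DistribFun

theorem lebesgue_integrable_iff_absolutely_G_integrable_general {K : Type*} [LinearOrder K]
    [TopologicalSpace K] [OrderTopology K] [CompactSpace K] [BoundedOrder K]
    [MeasurableSpace K] [BorelSpace K]
    (G : K → ℝ) (hGpos : ∀ x : K, 0 ≤ G x)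
    (μ : MeasureTheory.Measure K) [μ.Regular]
    (hμ : ∀ x : K, μ (Set.Icc ⊥ x) = ENNReal.ofReal (G x))
    (f : K → ℝ) (hf : Measurable f) :
    (MeasureTheory.Integrable f μ ↔
      (∃ A, HasIntegral f G (⊥ : K) ⊤ A) ∧
      (∃ B, HasIntegral (fun x => |f x|) G (⊥ : K) ⊤ B)) ∧
    ∀ A, HasIntegral f G (⊥ : K) ⊤ A → MeasureTheory.Integrable f μ →
      A = ∫ x, f x ∂μ := by
  have : IsFiniteMeasure μ := ⟨by rw [← Icc_bot_top, hμ]; exact ENNReal.ofReal_lt_top⟩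
  obtain rfl : G = distribFun μ := funext fun x => by
    rw [distribFun, measureReal_def, ← Icc_bot, hμ, ENNReal.toReal_ofReal (hGpos x)]
  refine ⟨⟨fun hfi => ⟨⟨_, hasIntegral_integral hfi⟩, ⟨_, hasIntegral_integral hfi.abs⟩⟩, ?_⟩,
    fun A hA hfi => hA.unique (hasIntegral_integral hfi)⟩
  rintro ⟨-, B, hB⟩
  exact integrable_of_hasIntegral_abs hf.aestronglyMeasurable hB

theorem lebesgue_integrable_iff_absolutely_G_integrable {K : Type*} [LinearOrder K]
    [TopologicalSpace K] [OrderTopology K] [CompactSpace K] [BoundedOrder K]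
    [MeasurableSpace K] [BorelSpace K]
    (G : K → ℝ) (hGmono : Monotone G) (hGpos : ∀ x : K, 0 ≤ G x) (hGam : Amenable G)
    (μ : MeasureTheory.Measure K) [μ.Regular]
    (hμ : ∀ x : K, μ (Set.Icc ⊥ x) = ENNReal.ofReal (G x))
    (f : K → ℝ) (hf : Measurable f) :
    (MeasureTheory.Integrable f μ ↔
      (∃ A, HasIntegral f G (⊥ : K) ⊤ A) ∧
      (∃ B, HasIntegral (fun x => |f x|) G (⊥ : K) ⊤ B)) ∧
    ∀ A, HasIntegral f G (⊥ : K) ⊤ A → MeasureTheory.Integrable f μ →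
      A = ∫ x, f x ∂μ :=
  lebesgue_integrable_iff_absolutely_G_integrable_general G hGpos μ hμ f hf
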